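/- Let L be a countably infinite discrete abelian group with compact dual L̂ whose Haar measure is normalized to total mass 1. If Γ ⊂ L is a nonempty finite set and M is a finite subgroup of L, then ∫_{M^⊥} g_Γ(τ) dτ = card{(k,k') ∈ Γ×Γ : k−k' ∈ M} / (card(M)·card(Γ)), where M^⊥ = {τ ∈ L̂ : e(k,τ) = 1 for all k ∈ M}. -/

import Mathlib

open MeasureTheory
open scoped ENNReal Classical

noncomputable section

variable {L : Type*} [AddCommGroup L] [TopologicalSpace L]

/-- The bi-character `e(k,τ) = τ(k)` of a discrete abelian group `L`, valued in `ℂ`. -/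
def bichar (k : L) (τ : PontryaginDual (Multiplicative L)) : ℂ :=
  (τ (Multiplicative.ofAdd k) : ℂ)

/-- `g_Γ(τ) = (1/card Γ)·|∑_{k∈Γ} e(k,τ)|²`. -/
def gfun (Γ : Finset L) (τ : PontryaginDual (Multiplicative L)) : ℝ :=
  (Γ.card : ℝ)⁻¹ * ‖∑ k ∈ Γ, bichar k τ‖ ^ 2

/-- The orthogonal complement `M^⊥ = {τ ∈ L̂ : e(k,τ) = 1 for all k ∈ M}` of a subgroup `M`. -/
def perpSet (M : AddSubgroup L) : Set (PontryaginDual (Multiplicative L)) :=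
  {τ | ∀ k ∈ M, bichar k τ = 1}

/-! Expanding the square, `g_Γ = (card Γ)⁻¹ ∑_{k,k' ∈ Γ} e(k - k', ·)`. Averaging the characters
`e(m, ·)`, `m ∈ M`, gives `(card M) · 1_{M^⊥}`, and by orthogonality (`∫ e(d, ·) dμ = 0` for
`d ≠ 0`, because characters of a discrete group separate points and `μ` is invariant) this yields
`∫_{M^⊥} e(d, ·) dμ = [d ∈ M] / card M`. -/

open Finset

lemma bichar_zero (τ : PontryaginDual (Multiplicative L)) : bichar (0 : L) τ = 1 := by
  simp [bichar]

lemma bichar_add (a b : L) (τ : PontryaginDual (Multiplicative L)) :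
    bichar (a + b) τ = bichar a τ * bichar b τ := by
  simp [bichar]

lemma bichar_mul (k : L) (σ τ : PontryaginDual (Multiplicative L)) :
    bichar k (σ * τ) = bichar k σ * bichar k τ := rfl

lemma conj_bichar (k : L) (τ : PontryaginDual (Multiplicative L)) :
    starRingEnd ℂ (bichar k τ) = bichar (-k) τ := by
  simp [bichar, ← Circle.coe_inv_eq_conj]

lemma norm_bichar (k : L) (τ : PontryaginDual (Multiplicative L)) : ‖bichar k τ‖ = 1 :=
  Circle.norm_coe _

lemma continuous_bichar (k : L) :
    Continuous fun τ : PontryaginDual (Multiplicative L) => bichar k τ :=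
  continuous_subtype_val.comp <|
    (continuous_eval_const (F := C(Multiplicative L, Circle)) (Multiplicative.ofAdd k)).comp
      (ContinuousMonoidHom.isInducing_toContinuousMap _ _).continuous

namespace AddCircle

def ratCastHom : AddCircle (1 : ℚ) →+ AddCircle (1 : ℝ) :=
  QuotientAddGroup.map _ _ (Rat.castHom ℝ).toAddMonoidHom
    (AddSubgroup.zmultiples_le.mpr ⟨1, by simp⟩)

lemma ratCastHom_injective : Function.Injective ratCastHom := by
  refine (injective_iff_map_eq_zero _).mpr fun x hx => ?_
  induction x using QuotientAddGroup.induction_on with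
  | H q =>
    obtain ⟨n, hn⟩ := (coe_eq_zero_iff (p := (1 : ℝ))).mp hx
    refine (coe_eq_zero_iff (p := (1 : ℚ))).mpr ⟨n, ?_⟩
    simpa using Rat.cast_injective (α := ℝ) (by simpa using hn)

end AddCircle

-- Characters into `ℚ/ℤ` separate points, and `ℚ/ℤ` embeds in the circle.
lemma exists_bichar_ne_one [DiscreteTopology L] {m : L} (hm : m ≠ 0) :
    ∃ τ : PontryaginDual (Multiplicative L), bichar m τ ≠ 1 := by
  obtain ⟨c, hc⟩ := CharacterModule.exists_character_apply_ne_zero_of_ne_zero hm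
  let χ : AddChar L Circle :=
    AddCircle.toCircle_addChar.compAddMonoidHom (AddCircle.ratCastHom.comp c)
  refine ⟨⟨χ.toMonoidHom, continuous_of_discreteTopology⟩, fun h => hc ?_⟩
  refine AddCircle.ratCastHom_injective <| AddCircle.injective_toCircle one_ne_zero ?_
  rw [map_zero, AddCircle.toCircle_zero]
  exact Circle.ext h

lemma isClosed_perpSet (M : AddSubgroup L) : IsClosed (perpSet M) := by
  simp only [perpSet, Set.ofPred_forall]
  exact isClosed_biInter fun k _ => isClosed_eq (continuous_bichar k) continuous_const

lemma sum_bichar_addSubgroup (M : AddSubgroup L) (hM : (M : Set L).Finite)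
    (τ : PontryaginDual (Multiplicative L)) :
    ∑ m ∈ hM.toFinset, bichar m τ = if τ ∈ perpSet M then (#hM.toFinset : ℂ) else 0 := by
  split_ifs with hτ
  · rw [sum_congr rfl fun m hm => hτ m (by simpa using hm)]
    simp
  · obtain ⟨m₀, hm₀, hτm₀⟩ : ∃ m₀ ∈ M, bichar m₀ τ ≠ 1 := by simpa [perpSet] using hτ
    refine eq_zero_of_mul_eq_self_left hτm₀ ?_
    rw [mul_sum]
    refine sum_equiv (Equiv.addLeft m₀) (fun m => ?_) fun m _ => (bichar_add m₀ m τ).symm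
    simp [M.add_mem_cancel_left hm₀]

section Integral

variable [MeasurableSpace (PontryaginDual (Multiplicative L))]
  [BorelSpace (PontryaginDual (Multiplicative L))]
  (μ : Measure (PontryaginDual (Multiplicative L)))

lemma integrable_bichar [IsFiniteMeasure μ] (k : L) : Integrable (fun τ => bichar k τ) μ :=
  Integrable.of_bound (continuous_bichar k).aestronglyMeasurable 1
    (ae_of_all _ fun τ => (norm_bichar k τ).le)

lemma integral_bichar_of_ne_zero [DiscreteTopology L] [μ.IsMulLeftInvariant] {m : L}
    (hm : m ≠ 0) : ∫ τ, bichar m τ ∂μ = 0 := by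
  obtain ⟨σ, hσ⟩ := exists_bichar_ne_one hm
  refine eq_zero_of_mul_eq_self_left hσ ?_
  simpa only [bichar_mul, integral_const_mul] using
    integral_mul_left_eq_self (fun τ => bichar m τ) σ (μ := μ)

lemma integral_bichar [DiscreteTopology L] [μ.IsMulLeftInvariant] [IsProbabilityMeasure μ]
    (m : L) : ∫ τ, bichar m τ ∂μ = if m = 0 then 1 else 0 := by
  split_ifs with hm
  · simp [hm, bichar_zero]
  · exact integral_bichar_of_ne_zero μ hm

lemma setIntegral_perpSet_bichar [DiscreteTopology L] [μ.IsMulLeftInvariant]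
    [IsProbabilityMeasure μ] (M : AddSubgroup L) (hM : (M : Set L).Finite) (d : L) :
    ∫ τ in perpSet M, bichar d τ ∂μ = if d ∈ M then (#hM.toFinset : ℂ)⁻¹ else 0 := by
  have hcard : (#hM.toFinset : ℂ) ≠ 0 :=
    Nat.cast_ne_zero.mpr (card_ne_zero_of_mem (hM.mem_toFinset.mpr M.zero_mem))
  have hind : ∀ τ, (perpSet M).indicator (bichar d) τ =
      (#hM.toFinset : ℂ)⁻¹ * ∑ m ∈ hM.toFinset, bichar (m + d) τ := by
    intro τ
    simp_rw [bichar_add, ← sum_mul, sum_bichar_addSubgroup]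
    by_cases hτ : τ ∈ perpSet M <;> simp [hτ, hcard]
  calc ∫ τ in perpSet M, bichar d τ ∂μ
      = ∫ τ, (perpSet M).indicator (bichar d) τ ∂μ :=
        (integral_indicator (isClosed_perpSet M).measurableSet).symm
    _ = (#hM.toFinset : ℂ)⁻¹ * ∑ m ∈ hM.toFinset, ∫ τ, bichar (m + d) τ ∂μ := by
        simp_rw [hind]
        rw [integral_const_mul, integral_finsetSum _ fun m _ => integrable_bichar μ (m + d)]
    _ = (#hM.toFinset : ℂ)⁻¹ * ∑ m ∈ hM.toFinset, if m = -d then 1 else 0 := by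
        simp_rw [integral_bichar, add_eq_zero_iff_eq_neg]
    _ = if d ∈ M then (#hM.toFinset : ℂ)⁻¹ else 0 := by
        rw [sum_ite_eq']
        by_cases hd : d ∈ M <;> simp [hd]

end Integral

lemma ofReal_gfun (Γ : Finset L) (τ : PontryaginDual (Multiplicative L)) :
    (gfun Γ τ : ℂ) = (#Γ : ℂ)⁻¹ * ∑ p ∈ Γ ×ˢ Γ, bichar (p.1 - p.2) τ := by
  rw [gfun, Complex.ofReal_mul, Complex.ofReal_pow, ← Complex.mul_conj', map_sum, sum_mul_sum,
    ← sum_product']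
  simp [conj_bichar, ← bichar_add, sub_eq_add_neg]

theorem integral_gfun_over_perp_general
    [DiscreteTopology L]
    [MeasurableSpace (PontryaginDual (Multiplicative L))]
    [BorelSpace (PontryaginDual (Multiplicative L))]
    (μ : Measure (PontryaginDual (Multiplicative L))) [μ.IsHaarMeasure] [IsProbabilityMeasure μ]
    (Γ : Finset L) (M : AddSubgroup L) (hM : (M : Set L).Finite) :
    ∫ τ in perpSet M, gfun Γ τ ∂μ =
      (((Γ ×ˢ Γ).filter (fun p => p.1 - p.2 ∈ M)).card : ℝ) /
        ((hM.toFinset.card : ℝ) * (Γ.card : ℝ)) := by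
  rw [← Complex.ofReal_inj, ← integral_complex_ofReal]
  simp_rw [ofReal_gfun]
  rw [integral_const_mul, integral_finsetSum _ fun p _ => (integrable_bichar μ _).restrict]
  simp_rw [setIntegral_perpSet_bichar μ M hM]
  rw [← sum_filter, sum_const, nsmul_eq_mul]
  push_cast
  ring

/-- If `Γ ⊆ L` is a nonempty finite set and `M` is a finite subgroup of the countably infinite
discrete abelian group `L`, then
`∫_{M^⊥} g_Γ(τ) dτ = card{(k,k') ∈ Γ×Γ : k−k' ∈ M} / (card M · card Γ)`. -/
theorem integral_gfun_over_perp
    [DiscreteTopology L] [Countable L] [Infinite L]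
    [MeasurableSpace (PontryaginDual (Multiplicative L))]
    [BorelSpace (PontryaginDual (Multiplicative L))]
    (μ : Measure (PontryaginDual (Multiplicative L))) [μ.IsHaarMeasure] [IsProbabilityMeasure μ]
    (Γ : Finset L) (hΓ : Γ.Nonempty) (M : AddSubgroup L) (hM : (M : Set L).Finite) :
    ∫ τ in perpSet M, gfun Γ τ ∂μ =
      (((Γ ×ˢ Γ).filter (fun p => p.1 - p.2 ∈ M)).card : ℝ) /
        ((hM.toFinset.card : ℝ) * (Γ.card : ℝ)) :=
  integral_gfun_over_perp_general μ Γ M hM
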